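/- arXiv:1003.4182 — 7 statements merged into one kernel-verified Lean document; each statement's English description precedes it below -/
import Mathlib

section
/- For any nonnegative integrable function f on ℝ^d with finite second moment I = ∫ |x|² f(x) dx, finite entropy ∫ f log f, mass M = ∫ f, and any δ > 0, one has ∫ f log f + δ I ≥ M log M + (dM/2) log(δ/π). -/
open MeasureTheory Real

lemma gibbs_pointwise {a b : ℝ} (ha : 0 ≤ a) (hb : 0 < b) :
    a - b ≤ a * Real.log a - a * Real.log b := by
  rcases eq_or_lt_of_le ha with h0 | hpos
  · simp only [← h0]; simp; linarith
  · have hba : 0 < b / a := div_pos hb hpos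
    have h1 : Real.log (b / a) ≤ b / a - 1 := Real.log_le_sub_one_of_pos hba
    have h2 : Real.log (b / a) = Real.log b - Real.log a :=
      Real.log_div (ne_of_gt hb) (ne_of_gt hpos)
    have h3 : a * Real.log (b / a) ≤ a * (b / a - 1) :=
      mul_le_mul_of_nonneg_left h1 ha
    have h4 : a * (b / a - 1) = b - a := by field_simp
    nlinarith [h3, h4, h2]

lemma integrable_rexp_neg_mul_sq_norm' {d : ℕ} {δ : ℝ} (hδ : 0 < δ) :
    Integrable (fun x : EuclideanSpace ℝ (Fin d) => Real.exp (-δ * ‖x‖ ^ 2)) := by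
  have hb : 0 < ((δ : ℂ)).re := by simpa using hδ
  have h := (GaussianFourier.integrable_cexp_neg_mul_sq_norm_add (V := EuclideanSpace ℝ (Fin d)) hb 0
    (0 : EuclideanSpace ℝ (Fin d))).re
  apply h.congr
  filter_upwards with x
  simp only [zero_mul, add_zero]
  rw [show (-(δ:ℂ) * (‖x‖:ℂ) ^ 2) = ((-δ * ‖x‖ ^ 2 : ℝ) : ℂ) by push_cast; ring,
    ← Complex.ofReal_exp]
  exact Complex.ofReal_re _

/-- Entropy lower bound (Lemma 2.1, inequality (est:entropy1)). -/
theorem entropy_lower_bound (d : ℕ) (hd : 1 ≤ d)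
    (f : EuclideanSpace ℝ (Fin d) → ℝ)
    (hf_nonneg : ∀ x, 0 ≤ f x)
    (hf_int : Integrable f)
    (hI_int : Integrable (fun x => ‖x‖ ^ 2 * f x))
    (hent_int : Integrable (fun x => f x * Real.log (f x)))
    (M I : ℝ)
    (hM : M = ∫ x, f x)
    (hI : I = ∫ x, ‖x‖ ^ 2 * f x)
    (δ : ℝ) (hδ : 0 < δ) :
    M * Real.log M + ((d : ℝ) * M / 2) * Real.log (δ / Real.pi)
      ≤ (∫ x, f x * Real.log (f x)) + δ * I := by
  have hMnn : 0 ≤ M := hM ▸ integral_nonneg hf_nonneg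
  rcases eq_or_lt_of_le hMnn with hM0 | hMpos
  · -- degenerate case M = 0 : f = 0 a.e.
    have hfae : f =ᵐ[volume] 0 := by
      have h0 : ∫ x, f x = 0 := by rw [← hM, ← hM0]
      exact (integral_eq_zero_iff_of_nonneg hf_nonneg hf_int).mp h0
    have hE : (∫ x, f x * Real.log (f x)) = 0 := by
      have : (fun x => f x * Real.log (f x)) =ᵐ[volume] 0 := by
        filter_upwards [hfae] with x hx; simp [hx]
      rw [integral_congr_ae this]; simp
    have hI0 : I = 0 := by
      have : (fun x => ‖x‖ ^ 2 * f x) =ᵐ[volume] 0 := by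
        filter_upwards [hfae] with x hx; simp [hx]
      rw [hI, integral_congr_ae this]; simp
    rw [hE, hI0, ← hM0]
    simp
  · -- main case M > 0
    set r : ℝ := (d : ℝ) / 2 with hr
    have hπ : 0 < Real.pi := Real.pi_pos
    have hδπ : 0 < δ / Real.pi := div_pos hδ hπ
    set c : ℝ := M * (δ / Real.pi) ^ r with hc
    have hcpos : 0 < c := mul_pos hMpos (Real.rpow_pos_of_pos hδπ r)
    set g : EuclideanSpace ℝ (Fin d) → ℝ := fun x => c * Real.exp (-δ * ‖x‖ ^ 2) with hg
    have hgpos : ∀ x, 0 < g x := fun x => mul_pos hcpos (Real.exp_pos _)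
    have hgi : Integrable g := (integrable_rexp_neg_mul_sq_norm' hδ).const_mul c
    -- value of ∫ g
    have hfinrank : (Module.finrank ℝ (EuclideanSpace ℝ (Fin d)) : ℝ) = (d : ℝ) := by
      simp [finrank_euclideanSpace]
    have hIg : ∫ x, g x = M := by
      rw [hg, integral_const_mul, GaussianFourier.integral_rexp_neg_mul_sq_norm hδ, hfinrank, hc]
      rw [mul_assoc, ← Real.mul_rpow (le_of_lt hδπ) (le_of_lt (div_pos hπ hδ))]
      rw [show δ / Real.pi * (Real.pi / δ) = 1 by field_simp]
      simp [hr]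
    -- log of g
    have hlogg : ∀ x, Real.log (g x) = Real.log c - δ * ‖x‖ ^ 2 := by
      intro x
      rw [hg, Real.log_mul (ne_of_gt hcpos) (ne_of_gt (Real.exp_pos _)), Real.log_exp]
      ring
    -- integrability of f * log g
    have hfg_int : Integrable (fun x => f x * Real.log (g x)) := by
      have heq : (fun x => f x * Real.log (g x))
          = fun x => Real.log c * f x - δ * (‖x‖ ^ 2 * f x) := by
        funext x; rw [hlogg x]; ring
      rw [heq]
      exact (hf_int.const_mul _).sub (hI_int.const_mul _)
    have hIfg : (∫ x, f x * Real.log (g x)) = Real.log c * M - δ * I := by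
      have heq : (fun x => f x * Real.log (g x))
          = fun x => Real.log c * f x - δ * (‖x‖ ^ 2 * f x) := by
        funext x; rw [hlogg x]; ring
      rw [heq, integral_sub (hf_int.const_mul _) (hI_int.const_mul _),
        integral_const_mul, integral_const_mul, ← hM, ← hI]
    -- pointwise Gibbs inequality and integration
    have key : ∀ x, f x - g x ≤ f x * Real.log (f x) - f x * Real.log (g x) :=
      fun x => gibbs_pointwise (hf_nonneg x) (hgpos x)
    have hmono : (∫ x, (f x - g x)) ≤ ∫ x, (f x * Real.log (f x) - f x * Real.log (g x)) :=
      integral_mono (hf_int.sub hgi) (hent_int.sub hfg_int) key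
    rw [integral_sub hf_int hgi, integral_sub hent_int hfg_int, ← hM, hIg, hIfg] at hmono
    -- rewrite log c
    have hlogc : Real.log c = Real.log M + r * Real.log (δ / Real.pi) := by
      rw [hc, Real.log_mul (ne_of_gt hMpos) (ne_of_gt (Real.rpow_pos_of_pos hδπ r)),
        Real.log_rpow hδπ]
    rw [hlogc] at hmono
    have : ((d : ℝ) * M / 2) * Real.log (δ / Real.pi) = M * (r * Real.log (δ / Real.pi)) := by
      rw [hr]; ring
    nlinarith [hmono]
end

section
/- For any nonnegative integrable f on ℝ^d with finite second moment I > 0, mass M > 0 and finite entropy, one has ∫ f log f + (dM/2)(log I + 1) ≥ M log M + (dM/2) log(dM/(2π)). -/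
/-!
Gibbs' inequality `∫ f log f ≥ ∫ f log g + ∫ f - ∫ g`, applied to the Gaussian
`g = M (δ/π)^(d/2) exp(-δ|x|²)` of the same mass `M` as `f`, gives
`∫ f log f + δ I ≥ M log M + (dM/2) log (δ/π)` for every `δ > 0`.
The choice `δ = dM/(2I)` maximises `(dM/2) log (δ/π) - δ I`.
-/

open MeasureTheory Real

theorem Real.mul_log_add_sub_le_mul_log {t s : ℝ} (ht : 0 ≤ t) (hs : 0 < s) :
    t * log s + t - s ≤ t * log t := by
  rcases ht.eq_or_lt with rfl | ht
  · simpa using hs.le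
  · have h := mul_le_mul_of_nonneg_left (log_le_sub_one_of_pos (div_pos hs ht)) ht.le
    rw [log_div hs.ne' ht.ne', mul_sub, mul_sub, mul_div_cancel₀ _ ht.ne'] at h
    linarith

theorem MeasureTheory.integral_mul_log_add_sub_le_integral_mul_log {α : Type*}
    [MeasurableSpace α] {μ : Measure α} {f g : α → ℝ} (hf : ∀ x, 0 ≤ f x) (hg : ∀ x, 0 < g x)
    (hf_int : Integrable f μ) (hg_int : Integrable g μ)
    (hfg_int : Integrable (fun x => f x * log (g x)) μ)
    (hff_int : Integrable (fun x => f x * log (f x)) μ) :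
    ∫ x, f x * log (g x) ∂μ + ∫ x, f x ∂μ - ∫ x, g x ∂μ ≤ ∫ x, f x * log (f x) ∂μ := by
  have h := integral_mono (f := fun x => f x * log (g x) + f x - g x)
    ((hfg_int.add hf_int).sub hg_int) hff_int fun x => mul_log_add_sub_le_mul_log (hf x) (hg x)
  rwa [integral_sub (f := fun x => f x * log (g x) + f x) (hfg_int.add hf_int) hg_int,
    integral_add hfg_int hf_int] at h

section InnerProductSpace

variable {V : Type*} [NormedAddCommGroup V] [InnerProductSpace ℝ V] [FiniteDimensional ℝ V]
  [MeasurableSpace V] [BorelSpace V]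

theorem integrable_rexp_neg_mul_sq_norm {b : ℝ} (hb : 0 < b) :
    Integrable fun v : V => rexp (-b * ‖v‖ ^ 2) :=
  .of_integral_ne_zero <| by
    rw [GaussianFourier.integral_rexp_neg_mul_sq_norm hb]
    positivity

theorem integral_mul_log_add_mul_integral_sq_norm_mul_ge {f : V → ℝ}
    (hf : ∀ x, 0 ≤ f x) (hf_int : Integrable f)
    (hI_int : Integrable fun x => ‖x‖ ^ 2 * f x)
    (hent_int : Integrable fun x => f x * log (f x))
    (hM : 0 < ∫ x, f x) {δ : ℝ} (hδ : 0 < δ) :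
    (∫ x, f x) * log (∫ x, f x)
        + (Module.finrank ℝ V * (∫ x, f x) / 2) * log (δ / π)
      ≤ (∫ x, f x * log (f x)) + δ * ∫ x, ‖x‖ ^ 2 * f x := by
  set M := ∫ x, f x
  set n := (Module.finrank ℝ V : ℝ)
  set c := M * (δ / π) ^ (n / 2)
  have hc : 0 < c := by positivity
  have hlog_gauss (x : V) : log (c * rexp (-δ * ‖x‖ ^ 2)) = log c - δ * ‖x‖ ^ 2 := by
    rw [log_mul hc.ne' (exp_pos _).ne', log_exp]
    ring
  have hgauss_mass : ∫ x : V, c * rexp (-δ * ‖x‖ ^ 2) = M := by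
    rw [integral_const_mul, GaussianFourier.integral_rexp_neg_mul_sq_norm hδ, mul_assoc,
      ← mul_rpow, div_mul_div_cancel₀ pi_pos.ne', div_self hδ.ne', one_rpow, mul_one] <;>
    positivity
  have hfg_eq : (fun x => f x * log (c * rexp (-δ * ‖x‖ ^ 2)))
      = fun x => log c * f x - δ * (‖x‖ ^ 2 * f x) := by
    ext x
    rw [hlog_gauss]
    ring
  have hgibbs := integral_mul_log_add_sub_le_integral_mul_log hf (fun x => by positivity)
    hf_int ((integrable_rexp_neg_mul_sq_norm hδ).const_mul c)
    (hfg_eq ▸ (hf_int.const_mul _).sub (hI_int.const_mul _)) hent_int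
  rw [hfg_eq, hgauss_mass, integral_sub (hf_int.const_mul _) (hI_int.const_mul _),
    integral_const_mul, integral_const_mul, log_mul hM.ne' (by positivity),
    log_rpow (by positivity)] at hgibbs
  linarith

end InnerProductSpace

/-- Entropy lower bound, optimized form (Lemma 2.1, inequality (est:entropy2)). -/
theorem entropy_lower_bound_optimized (d : ℕ) (hd : 1 ≤ d)
    (f : EuclideanSpace ℝ (Fin d) → ℝ)
    (hf_nonneg : ∀ x, 0 ≤ f x)
    (hf_int : Integrable f)
    (hI_int : Integrable (fun x => ‖x‖ ^ 2 * f x))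
    (hent_int : Integrable (fun x => f x * Real.log (f x)))
    (M I : ℝ)
    (hM : M = ∫ x, f x) (hMpos : 0 < M)
    (hI : I = ∫ x, ‖x‖ ^ 2 * f x) (hIpos : 0 < I) :
    M * Real.log M + ((d : ℝ) * M / 2) * Real.log ((d : ℝ) * M / (2 * Real.pi))
      ≤ (∫ x, f x * Real.log (f x)) + ((d : ℝ) * M / 2) * (Real.log I + 1) := by
  have hd_pos : (0 : ℝ) < d := by exact_mod_cast hd
  set δ := (d : ℝ) * M / (2 * I) with hδ_def
  have hδI : δ * I = d * M / 2 := by rw [hδ_def]; field_simp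
  have hlog_δ : log (δ / π) = log (d * M / (2 * π)) - log I := by
    rw [← log_div (by positivity) hIpos.ne', hδ_def]
    congr 1
    field_simp
  have h := integral_mul_log_add_mul_integral_sq_norm_mul_ge hf_nonneg
    hf_int hI_int hent_int (hM ▸ hMpos) (show 0 < δ by positivity)
  rw [finrank_euclideanSpace_fin, ← hM, ← hI, hlog_δ, hδI] at h
  linarith
end

section
/- The gradient of the Bessel kernel satisfies ∇B_d^α(x) = −(1/|𝕊^{d−1}|) · (x/|x|^d) · g_α(|x|), where g_α(r) = Γ(d/2)^{-1} ∫₀^∞ s^{d/2−1} e^{−s − α r²/(4s)} ds; moreover g_α is positive, and for α > 0 it is strictly decreasing in r from 1 (at r = 0) to 0 as r → ∞. -/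
/-!
Write `B_d^α(x) = (4π)^{-d/2} F(|x|²/4)` with `F(c) = ∫₀^∞ t^{-d/2} e^{-c/t - αt} dt`. For `c > 0`
the integrand only decreases as `c` grows, so its value at `c/2` dominates nearby and `F` may be
differentiated under the integral sign: `F'(c) = -∫₀^∞ t^{-d/2-1} e^{-c/t-αt} dt`. The
substitution `t = c/s` turns this into `-c^{-d/2} ∫₀^∞ s^{d/2-1} e^{-s-αc/s} ds
= -c^{-d/2} Γ(d/2) g_α(|x|)`, and the chain rule through `|x|²` gives the gradient.

In `g_α` the integrand is positive, strictly decreasing in `r` when `α > 0`, dominated by the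
Gamma integrand `s^{d/2-1} e^{-s}` (its value at `r = 0`) and tends to `0` pointwise as `r → ∞`.
-/

open MeasureTheory Real

/-- The Bessel kernel `B_d^α`. -/
noncomputable def besselKernel (d : ℕ) (α : ℝ) (x : EuclideanSpace ℝ (Fin d)) : ℝ :=
  ∫ t in Set.Ioi (0 : ℝ), (4 * Real.pi * t) ^ (-(d : ℝ) / 2) *
    Real.exp (-‖x‖ ^ 2 / (4 * t) - α * t)

/-- The profile `g_α(r) = Γ(d/2)⁻¹ ∫₀^∞ s^{d/2-1} e^{-s - α r²/(4s)} ds`. -/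
noncomputable def besselProfile (d : ℕ) (α : ℝ) (r : ℝ) : ℝ :=
  (Real.Gamma ((d : ℝ) / 2))⁻¹ *
    ∫ s in Set.Ioi (0 : ℝ), s ^ ((d : ℝ) / 2 - 1) * Real.exp (-s - α * r ^ 2 / (4 * s))

open Set Filter Topology

section Inversion

variable {E : Type*} [NormedAddCommGroup E] [NormedSpace ℝ E] {c : ℝ}

lemma image_div_Ioi_zero (hc : 0 < c) : (c / ·) '' Ioi (0 : ℝ) = Ioi 0 := by
  refine Subset.antisymm (image_subset_iff.2 fun s hs => div_pos hc hs) fun t ht => ?_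
  exact ⟨c / t, div_pos hc ht, div_div_cancel₀ hc.ne'⟩

lemma injOn_div_Ioi_zero (hc : 0 < c) : InjOn (c / ·) (Ioi (0 : ℝ)) :=
  fun s _ t _ hst => by simpa [div_eq_mul_inv, hc.ne'] using hst

lemma hasDerivWithinAt_div_Ioi_zero (c : ℝ) {s : ℝ} (hs : s ∈ Ioi (0 : ℝ)) :
    HasDerivWithinAt (c / ·) (-(c / s ^ 2)) (Ioi 0) s := by
  simpa [div_eq_mul_inv] using ((hasDerivAt_inv (ne_of_gt hs)).const_mul c).hasDerivWithinAt

theorem integral_Ioi_comp_div (hc : 0 < c) (g : ℝ → E) :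
    ∫ t in Ioi 0, g t = ∫ s in Ioi 0, (c / s ^ 2) • g (c / s) := by
  calc ∫ t in Ioi 0, g t = ∫ t in (c / ·) '' Ioi 0, g t := by rw [image_div_Ioi_zero hc]
    _ = ∫ s in Ioi 0, |-(c / s ^ 2)| • g (c / s) :=
      integral_image_eq_integral_abs_deriv_smul measurableSet_Ioi
        (fun s hs => hasDerivWithinAt_div_Ioi_zero c hs) (injOn_div_Ioi_zero hc) g
    _ = _ := setIntegral_congr_fun measurableSet_Ioi fun s hs => by
      rw [abs_neg, abs_of_pos (div_pos hc (pow_pos hs 2))]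

theorem integrableOn_Ioi_comp_div_iff (hc : 0 < c) (g : ℝ → E) :
    IntegrableOn (fun s => (c / s ^ 2) • g (c / s)) (Ioi 0) ↔ IntegrableOn g (Ioi 0) := by
  have h := integrableOn_image_iff_integrableOn_abs_deriv_smul measurableSet_Ioi
    (fun s hs => hasDerivWithinAt_div_Ioi_zero c hs) (injOn_div_Ioi_zero hc) g
  rw [image_div_Ioi_zero hc] at h
  rw [h]
  exact integrableOn_congr_fun (fun s hs => by
      rw [abs_neg, abs_of_pos (div_pos hc (pow_pos hs 2))]) measurableSet_Ioi

end Inversion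

lemma setIntegral_pos_of_forall_pos {X : Type*} [MeasurableSpace X] {μ : Measure X} {s : Set X}
    {f : X → ℝ} (hs : MeasurableSet s) (hμs : μ s ≠ 0) (hf : IntegrableOn f s μ)
    (hpos : ∀ x ∈ s, 0 < f x) : 0 < ∫ x in s, f x ∂μ := by
  rw [setIntegral_pos_iff_support_of_nonneg_ae ((ae_restrict_iff' hs).2
    (Eventually.of_forall fun x hx => (hpos x hx).le)) hf]
  exact (pos_iff_ne_zero.2 hμs).trans_le
    (measure_mono fun x hx => ⟨(hpos x hx).ne', hx⟩)

/-- `∫₀^∞ s^q e^{-s-γ/s} ds = 2 γ^{(q+1)/2} K_{q+1}(2√γ)` for `γ > 0`, with `K` the Macdonald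
function. -/
noncomputable def besselIntegral (q γ : ℝ) : ℝ :=
  ∫ s in Ioi 0, s ^ q * exp (-s - γ / s)

section BesselIntegral

variable {q γ : ℝ}

lemma measurable_besselIntegrand (q γ : ℝ) :
    Measurable fun s : ℝ => s ^ q * exp (-s - γ / s) := by
  fun_prop

lemma integrableOn_besselIntegrand (hq : -1 < q) (hγ : 0 ≤ γ) :
    IntegrableOn (fun s : ℝ => s ^ q * exp (-s - γ / s)) (Ioi 0) := by
  refine Integrable.mono (GammaIntegral_convergent (by linarith : 0 < q + 1))
    (measurable_besselIntegrand q γ).aestronglyMeasurable ?_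
  filter_upwards [ae_restrict_mem measurableSet_Ioi] with s (hs : 0 < s)
  have hγs : 0 ≤ γ / s := div_nonneg hγ hs.le
  rw [norm_of_nonneg (by positivity), norm_of_nonneg (by positivity), add_sub_cancel_right,
    mul_comm (exp _)]
  gcongr
  linarith

lemma besselIntegral_pos (hq : -1 < q) (hγ : 0 ≤ γ) : 0 < besselIntegral q γ :=
  setIntegral_pos_of_forall_pos measurableSet_Ioi (by simp)
    (integrableOn_besselIntegrand hq hγ) fun s hs => by
      have : (0 : ℝ) < s := hs
      positivity

lemma besselIntegral_sub_one_zero (hq : 0 < q) : besselIntegral (q - 1) 0 = Gamma q := by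
  rw [Gamma_eq_integral hq]
  refine setIntegral_congr_fun measurableSet_Ioi fun s _ => ?_
  rw [zero_div, sub_zero, mul_comm]

lemma besselIntegral_strictAntiOn (hq : -1 < q) : StrictAntiOn (besselIntegral q) (Ici 0) := by
  intro γ₁ (h₁ : 0 ≤ γ₁) γ₂ _ h₁₂
  have hint₁ := integrableOn_besselIntegrand hq h₁
  have hint₂ := integrableOn_besselIntegrand hq (h₁.trans h₁₂.le)
  rw [← sub_pos, besselIntegral, besselIntegral, ← integral_sub hint₁ hint₂]
  refine setIntegral_pos_of_forall_pos measurableSet_Ioi (by simp) (hint₁.sub hint₂)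
    fun s (hs : 0 < s) => ?_
  have : γ₁ / s < γ₂ / s := div_lt_div_of_pos_right h₁₂ hs
  rw [sub_pos]
  gcongr

lemma tendsto_besselIntegral_atTop (hq : -1 < q) :
    Tendsto (besselIntegral q) atTop (𝓝 0) := by
  have hlim := tendsto_integral_filter_of_dominated_convergence (μ := volume.restrict (Ioi 0))
    (l := atTop) (f := fun _ => 0)
    (fun s : ℝ => s ^ q * exp (-s - 0 / s)) (F := fun γ s => s ^ q * exp (-s - γ / s))
    (Eventually.of_forall fun γ => (measurable_besselIntegrand q γ).aestronglyMeasurable) ?_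
    (integrableOn_besselIntegrand hq le_rfl) ?_
  · rw [integral_zero] at hlim
    exact hlim
  · filter_upwards [eventually_ge_atTop 0] with γ hγ
    filter_upwards [ae_restrict_mem measurableSet_Ioi] with s (hs : 0 < s)
    have hγs : 0 ≤ γ / s := div_nonneg hγ hs.le
    rw [norm_of_nonneg (by positivity), zero_div, sub_zero]
    gcongr
    linarith
  · filter_upwards [ae_restrict_mem measurableSet_Ioi] with s (hs : 0 < s)
    have hexp : Tendsto (fun γ => -s - γ / s) atTop atBot :=
      tendsto_atBot_add_const_left _ _ (tendsto_neg_atTop_atBot.comp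
        (tendsto_id.atTop_div_const hs))
    simpa using (tendsto_exp_atBot.comp hexp).const_mul (s ^ q)

end BesselIntegral

section InverseExponential

variable {b β c : ℝ}

lemma div_sq_mul_rpow_mul_exp_div (b β : ℝ) (hc : 0 < c) {s : ℝ} (hs : 0 < s) :
    c / s ^ 2 * ((c / s) ^ b * exp (-c / (c / s) - β * (c / s)))
      = c ^ (b + 1) * (s ^ (-b - 2) * exp (-s - β * c / s)) := by
  have hexp : -c / (c / s) - β * (c / s) = -s - β * c / s := by
    field_simp
  rw [hexp, div_rpow hc.le hs.le, rpow_add hc, rpow_one, rpow_sub hs, rpow_neg hs.le,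
    rpow_two]
  field_simp

theorem integral_rpow_mul_exp_eq_besselIntegral (b β : ℝ) (hc : 0 < c) :
    ∫ t in Ioi 0, t ^ b * exp (-c / t - β * t) = c ^ (b + 1) * besselIntegral (-b - 2) (β * c) := by
  rw [integral_Ioi_comp_div hc, besselIntegral, ← integral_const_mul]
  exact setIntegral_congr_fun measurableSet_Ioi fun s hs =>
    div_sq_mul_rpow_mul_exp_div b β hc hs

theorem integrableOn_rpow_mul_exp (hb : b < -1) (hβ : 0 ≤ β) (hc : 0 < c) :
    IntegrableOn (fun t : ℝ => t ^ b * exp (-c / t - β * t)) (Ioi 0) := by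
  rw [← integrableOn_Ioi_comp_div_iff hc]
  refine IntegrableOn.congr_fun ((integrableOn_besselIntegrand (q := -b - 2) (by linarith)
    (mul_nonneg hβ hc.le)).const_mul (c ^ (b + 1))) (fun s hs => ?_) measurableSet_Ioi
  rw [smul_eq_mul, div_sq_mul_rpow_mul_exp_div b β hc hs]

theorem hasDerivAt_integral_rpow_mul_exp (hb : b < -1) (hβ : 0 ≤ β) (hc : 0 < c) :
    HasDerivAt (fun c => ∫ t in Ioi 0, t ^ b * exp (-c / t - β * t))
      (-∫ t in Ioi 0, t ^ (b - 1) * exp (-c / t - β * t)) c := by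
  rw [← integral_neg]
  refine (hasDerivAt_integral_of_dominated_loc_of_deriv_le (μ := volume.restrict (Ioi 0))
    (F := fun u t => t ^ b * exp (-u / t - β * t))
    (F' := fun u t => -(t ^ (b - 1) * exp (-u / t - β * t)))
    (bound := fun t => t ^ (b - 1) * exp (-(c / 2) / t - β * t))
    (Metric.ball_mem_nhds c (half_pos hc))
    (Eventually.of_forall fun c => (by fun_prop : Measurable _).aestronglyMeasurable)
    (integrableOn_rpow_mul_exp hb hβ hc) (by fun_prop : Measurable _).aestronglyMeasurable
    ?_ (integrableOn_rpow_mul_exp (by linarith) hβ (half_pos hc)) ?_).2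
  · filter_upwards [ae_restrict_mem measurableSet_Ioi] with t (ht : 0 < t) u hu
    have hcu : c / 2 ≤ u := by
      have := abs_sub_lt_iff.1 (Real.dist_eq u c ▸ Metric.mem_ball.1 hu)
      linarith
    rw [norm_neg, norm_of_nonneg (by positivity)]
    gcongr
  · filter_upwards [ae_restrict_mem measurableSet_Ioi] with t (ht : 0 < t) u _
    have hexp : HasDerivAt (fun u => -u / t - β * t) (-1 / t) u :=
      ((hasDerivAt_id u).neg.div_const t).sub_const _
    refine (hexp.exp.const_mul (t ^ b)).congr_deriv ?_
    rw [rpow_sub_one ht.ne']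
    ring

end InverseExponential

lemma HasDerivAt.hasGradientAt_comp_norm_sq {F : Type*} [NormedAddCommGroup F]
    [InnerProductSpace ℝ F] [CompleteSpace F] {f : ℝ → ℝ} {f' : ℝ} {x : F}
    (hf : HasDerivAt f f' (‖x‖ ^ 2)) :
    HasGradientAt (fun y => f (‖y‖ ^ 2)) ((2 * f') • x) x := by
  rw [hasGradientAt_iff_hasFDerivAt]
  refine (hf.comp_hasFDerivAt x (hasStrictFDerivAt_norm_sq x).hasFDerivAt).congr_fderiv ?_
  ext y
  simp only [smul_apply, innerSL_apply_apply, InnerProductSpace.toDual_apply_apply,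
    real_inner_smul_left, smul_eq_mul, nsmul_eq_mul]
  push_cast
  ring

lemma besselProfile_eq_besselIntegral (d : ℕ) (α r : ℝ) :
    besselProfile d α r
      = (Gamma ((d : ℝ) / 2))⁻¹ * besselIntegral ((d : ℝ) / 2 - 1) (α * (r ^ 2 / 4)) := by
  rw [besselProfile, besselIntegral]
  congr 1
  refine setIntegral_congr_fun measurableSet_Ioi fun s _ => ?_
  rw [mul_div_assoc', div_div]

lemma besselKernel_eq_integral_rpow_mul_exp (d : ℕ) (α : ℝ) (x : EuclideanSpace ℝ (Fin d)) :
    besselKernel d α x = (4 * π) ^ (-(d : ℝ) / 2) *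
      ∫ t in Ioi 0, t ^ (-(d : ℝ) / 2) * exp (-(‖x‖ ^ 2 / 4) / t - α * t) := by
  rw [besselKernel, ← integral_const_mul]
  refine setIntegral_congr_fun measurableSet_Ioi fun t (ht : 0 < t) => ?_
  rw [mul_rpow (by positivity) ht.le, mul_assoc]
  congr 4
  ring

section Bessel

variable {d : ℕ} {α : ℝ}

lemma besselProfile_pos (hd : 0 < d) (hα : 0 ≤ α) (r : ℝ) : 0 < besselProfile d α r := by
  have hd' : (0 : ℝ) < d := Nat.cast_pos.2 hd
  rw [besselProfile_eq_besselIntegral]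
  exact mul_pos (inv_pos.2 (Gamma_pos_of_pos (by positivity)))
    (besselIntegral_pos (by linarith) (by positivity))

lemma besselProfile_zero (hd : 0 < d) : besselProfile d α 0 = 1 := by
  have hd' : (0 : ℝ) < d := Nat.cast_pos.2 hd
  rw [besselProfile_eq_besselIntegral, zero_pow two_ne_zero, zero_div, mul_zero,
    besselIntegral_sub_one_zero (by positivity),
    inv_mul_cancel₀ (Gamma_pos_of_pos (by positivity)).ne']

lemma besselProfile_strictAntiOn (hd : 0 < d) (hα : 0 < α) :
    StrictAntiOn (besselProfile d α) (Ici 0) := by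
  have hd' : (0 : ℝ) < d := Nat.cast_pos.2 hd
  intro r₁ (h₁ : 0 ≤ r₁) r₂ _ h₁₂
  have hγ : α * (r₁ ^ 2 / 4) < α * (r₂ ^ 2 / 4) := by gcongr
  rw [besselProfile_eq_besselIntegral, besselProfile_eq_besselIntegral]
  exact mul_lt_mul_of_pos_left (besselIntegral_strictAntiOn (by linarith)
    (by positivity : (0 : ℝ) ≤ _) (by positivity : (0 : ℝ) ≤ _) hγ)
    (inv_pos.2 (Gamma_pos_of_pos (by positivity)))

lemma tendsto_besselProfile_atTop (hd : 0 < d) (hα : 0 < α) :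
    Tendsto (besselProfile d α) atTop (𝓝 0) := by
  have hd' : (0 : ℝ) < d := Nat.cast_pos.2 hd
  have hγ : Tendsto (fun r : ℝ => α * (r ^ 2 / 4)) atTop atTop :=
    ((tendsto_pow_atTop two_ne_zero).atTop_div_const four_pos).const_mul_atTop hα
  have h := ((tendsto_besselIntegral_atTop (q := (d : ℝ) / 2 - 1) (by linarith)).comp hγ).const_mul
    (Gamma ((d : ℝ) / 2))⁻¹
  rw [mul_zero] at h
  exact h.congr fun r => (besselProfile_eq_besselIntegral d α r).symm

theorem hasGradientAt_besselKernel (hd : 3 ≤ d) (hα : 0 ≤ α) {x : EuclideanSpace ℝ (Fin d)}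
    (hx : x ≠ 0) :
    HasGradientAt (besselKernel d α)
      ((-(1 / (2 * π ^ ((d : ℝ) / 2) / Gamma ((d : ℝ) / 2))) * ‖x‖ ^ (-(d : ℝ)) *
        besselProfile d α ‖x‖) • x) x := by
  have hd' : (3 : ℝ) ≤ d := by exact_mod_cast hd
  have hr : 0 < ‖x‖ := norm_pos_iff.2 hx
  have hc : 0 < ‖x‖ ^ 2 / 4 := by positivity
  have hΓ : 0 < Gamma ((d : ℝ) / 2) := Gamma_pos_of_pos (by linarith)
  have hF := hasDerivAt_integral_rpow_mul_exp (b := -(d : ℝ) / 2) (by linarith) hα hc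
  have hK : HasDerivAt (fun u => (4 * π) ^ (-(d : ℝ) / 2) *
      ∫ t in Ioi 0, t ^ (-(d : ℝ) / 2) * exp (-(u / 4) / t - α * t)) _ (‖x‖ ^ 2) :=
    (hF.comp (‖x‖ ^ 2) ((hasDerivAt_id (‖x‖ ^ 2)).div_const 4)).const_mul _
  have hJ : ∫ t in Ioi 0, t ^ (-(d : ℝ) / 2 - 1) * exp (-(‖x‖ ^ 2 / 4) / t - α * t)
      = (‖x‖ ^ 2 / 4) ^ (-(d : ℝ) / 2) * (Gamma ((d : ℝ) / 2) * besselProfile d α ‖x‖) := by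
    rw [integral_rpow_mul_exp_eq_besselIntegral _ _ hc, besselProfile_eq_besselIntegral,
      mul_inv_cancel_left₀ hΓ.ne', sub_add_cancel, mul_comm α]
    congr 2
    ring
  have hconst : (4 * π) ^ (-(d : ℝ) / 2) * (‖x‖ ^ 2 / 4) ^ (-(d : ℝ) / 2)
      = (π ^ ((d : ℝ) / 2))⁻¹ * ‖x‖ ^ (-(d : ℝ)) := by
    rw [← mul_rpow (by positivity) (by positivity),
      show 4 * π * (‖x‖ ^ 2 / 4) = π * ‖x‖ ^ 2 by ring, mul_rpow pi_pos.le (by positivity),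
      neg_div, rpow_neg pi_pos.le, ← rpow_natCast, ← rpow_mul hr.le]
    congr 2
    push_cast
    ring
  rw [funext (besselKernel_eq_integral_rpow_mul_exp d α)]
  convert hK.hasGradientAt_comp_norm_sq using 2
  rw [hJ, one_div_div]
  linear_combination (Gamma ((d : ℝ) / 2) * besselProfile d α ‖x‖ / 2) * hconst

end Bessel

/-- Gradient formula for the Bessel kernel (Lemma 2.3 (ii)):
`∇B_d^α(x) = -(1/|𝕊^{d-1}|) (x/|x|^d) g_α(|x|)`, with `g_α` positive, and for `α > 0`
strictly decreasing from `1` (at `r = 0`) to `0` at infinity. -/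
theorem bessel_gradient_formula (d : ℕ) (hd : 3 ≤ d) (α : ℝ) (hα : 0 ≤ α) :
    (∀ x : EuclideanSpace ℝ (Fin d), x ≠ 0 →
      gradient (besselKernel d α) x
        = (-(1 / (2 * Real.pi ^ ((d : ℝ) / 2) / Real.Gamma ((d : ℝ) / 2))) *
            ‖x‖ ^ (-(d : ℝ)) * besselProfile d α ‖x‖) • x)
    ∧ (∀ r : ℝ, 0 ≤ r → 0 < besselProfile d α r)
    ∧ (0 < α →
        besselProfile d α 0 = 1 ∧
        StrictAntiOn (besselProfile d α) (Set.Ici 0) ∧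
        Filter.Tendsto (besselProfile d α) Filter.atTop (nhds 0)) := by
  have hd₀ : 0 < d := by omega
  refine ⟨fun x hx => (hasGradientAt_besselKernel hd hα hx).gradient,
    fun r _ => besselProfile_pos hd₀ hα r, fun hα₀ => ?_⟩
  exact ⟨besselProfile_zero hd₀, besselProfile_strictAntiOn hd₀ hα₀,
    tendsto_besselProfile_atTop hd₀ hα₀⟩
end

section
/- Let p > 1, M > 0, η > 0, K > 0 and let u : (0,T) → ℝ be nonnegative satisfying u'(t) ≤ −A u(t)^{p/(p−1)} + B where A = 4(p−1)η M^{-1/(p−1)} and B = 4K^p M. Then there exists a constant C = C(A, B, p) (independent of u(0)) such that u(t) ≤ C t^{-(p−1)} + C for all t ∈ (0,T). -/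
open Real

/-!
For `q = p / (p - 1)`, the function `φ(s) = c₁ s^{-(p-1)} + c₂` is a strict super-solution of
`v' = -A v^q + B` as soon as `A c₁^q = (p - 1) c₁` and `A c₂^q > B`: by superadditivity of
`x ↦ x^q`, the term `A (c₁ s^{-(p-1)})^q` absorbs `φ'(s)` and `A c₂^q` absorbs `B`.
Since `φ` blows up at `0`, a time-shift of `φ` lies above `u(t/2)` however large that value is,
and comparison on `[t/2, t]` gives `u(t) ≤ c₁ (t/2)^{-(p-1)} + c₂`.
-/

open Set Filter Topology

theorem image_le_of_subsolution_of_strict_supersolution {F u u' φ φ' : ℝ → ℝ} {a b : ℝ}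
    (hu : ∀ x ∈ Icc a b, HasDerivAt u (u' x) x) (hφ : ∀ x ∈ Icc a b, HasDerivAt φ (φ' x) x)
    (hu' : ∀ x ∈ Ico a b, u' x ≤ F (u x)) (hφ' : ∀ x ∈ Ico a b, F (φ x) < φ' x)
    (ha : u a ≤ φ a) : ∀ ⦃x⦄, x ∈ Icc a b → u x ≤ φ x :=
  image_le_of_deriv_right_lt_deriv_boundary'
    (fun x hx => (hu x hx).continuousAt.continuousWithinAt)
    (fun x hx => (hu x (Ico_subset_Icc_self hx)).hasDerivWithinAt) ha
    (fun x hx => (hφ x hx).continuousAt.continuousWithinAt)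
    (fun x hx => (hφ x (Ico_subset_Icc_self hx)).hasDerivWithinAt)
    (fun x hx hux => (hu' x hx).trans_lt (hux ▸ hφ' x hx))

namespace Hypercontractivity

variable {p A : ℝ}

noncomputable def barrierCoeff (p A : ℝ) : ℝ := ((p - 1) / A) ^ (p - 1)

noncomputable def barrierConst (p A B : ℝ) : ℝ := ((|B| + 1) / A) ^ ((p - 1) / p)

noncomputable def barrier (p A B s : ℝ) : ℝ :=
  barrierCoeff p A * s ^ (-(p - 1)) + barrierConst p A B

lemma barrierCoeff_pos (hp : 1 < p) (hA : 0 < A) : 0 < barrierCoeff p A :=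
  rpow_pos_of_pos (div_pos (by linarith) hA) _

lemma barrierConst_pos (hA : 0 < A) (B : ℝ) : 0 < barrierConst p A B :=
  rpow_pos_of_pos (by positivity) _

lemma mul_barrierCoeff_rpow (hp : 1 < p) (hA : 0 < A) :
    A * barrierCoeff p A ^ (p / (p - 1)) = (p - 1) * barrierCoeff p A := by
  have hp1 : p - 1 ≠ 0 := by linarith
  have hr : 0 < (p - 1) / A := div_pos (by linarith) hA
  rw [barrierCoeff, ← rpow_mul hr.le, mul_div_cancel₀ p hp1, rpow_sub_one hr.ne']
  field_simp

lemma mul_barrierConst_rpow (hp : 1 < p) (hA : 0 < A) (B : ℝ) :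
    A * barrierConst p A B ^ (p / (p - 1)) = |B| + 1 := by
  have hp1 : p - 1 ≠ 0 := by linarith
  have hp0 : p ≠ 0 := by linarith
  rw [barrierConst, ← rpow_mul (by positivity), div_mul_div_cancel₀ hp0, div_self hp1, rpow_one]
  field_simp

lemma barrier_rpow_lt (hp : 1 < p) (hA : 0 < A) (B : ℝ) {s : ℝ} (hs : 0 < s) :
    -A * barrier p A B s ^ (p / (p - 1)) + B < -((p - 1) * barrierCoeff p A) * s ^ (-p) := by
  set q := p / (p - 1)
  set c₁ := barrierCoeff p A
  set c₂ := barrierConst p A B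
  set y := s ^ (-(p - 1))
  have hp1 : p - 1 ≠ 0 := by linarith
  have hc₁ := barrierCoeff_pos hp hA
  have hy : 0 ≤ y := (rpow_pos_of_pos hs _).le
  have hyq : y ^ q = s ^ (-p) := by
    rw [← rpow_mul hs.le, neg_mul, mul_div_cancel₀ p hp1]
  have hsuper : (c₁ * y) ^ q + c₂ ^ q ≤ barrier p A B s ^ q :=
    add_rpow_le_rpow_add (by positivity) (barrierConst_pos hA B).le
      ((one_le_div (by linarith)).mpr (by linarith))
  have hsplit : A * ((c₁ * y) ^ q + c₂ ^ q) = (p - 1) * c₁ * y ^ q + (|B| + 1) := by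
    rw [mul_rpow hc₁.le hy, mul_add, ← mul_assoc, mul_barrierCoeff_rpow hp hA,
      mul_barrierConst_rpow hp hA]
  rw [← hyq]
  nlinarith [mul_le_mul_of_nonneg_left hsuper hA.le, le_abs_self B]

lemma hasDerivAt_barrier_sub (p A B : ℝ) {a s : ℝ} (has : a < s) :
    HasDerivAt (fun s => barrier p A B (s - a))
      (-((p - 1) * barrierCoeff p A) * (s - a) ^ (-p)) s := by
  have h := ((((hasDerivAt_id s).sub_const a).rpow_const (p := -(p - 1))
    (Or.inl (sub_pos.mpr has).ne')).const_mul (barrierCoeff p A)).add_const (barrierConst p A B)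
  refine h.congr_deriv ?_
  rw [show -(p - 1) - 1 = -p by ring]
  simp only [id]
  ring

lemma tendsto_barrier (hp : 1 < p) (hA : 0 < A) (B : ℝ) :
    Tendsto (barrier p A B) (𝓝[>] 0) atTop :=
  tendsto_atTop_add_const_right _ _ <|
    (tendsto_rpow_neg_nhdsGT_zero (by linarith)).const_mul_atTop (barrierCoeff_pos hp hA)

lemma barrier_le_barrier (hp : 1 < p) (hA : 0 < A) (B : ℝ) {s t : ℝ} (hs : 0 < s)
    (hst : s ≤ t) : barrier p A B t ≤ barrier p A B s := by
  unfold barrier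
  gcongr ?_ + _
  exact mul_le_mul_of_nonneg_left (rpow_le_rpow_of_nonpos hs hst (by linarith))
    (barrierCoeff_pos hp hA).le

lemma barrier_half (p A B : ℝ) {t : ℝ} (ht : 0 < t) :
    barrier p A B (t / 2) =
      barrierCoeff p A * 2 ^ (p - 1) * t ^ (-(p - 1)) + barrierConst p A B := by
  rw [barrier, div_rpow ht.le zero_le_two, rpow_neg zero_le_two, div_eq_mul_inv, inv_inv]
  ring

lemma le_barrier_half (hp : 1 < p) (hA : 0 < A) {B T : ℝ} {u u' : ℝ → ℝ}
    (hu : ∀ t ∈ Ioo 0 T, HasDerivAt u (u' t) t)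
    (hu' : ∀ t ∈ Ioo 0 T, u' t ≤ -A * u t ^ (p / (p - 1)) + B) {t : ℝ} (ht : t ∈ Ioo 0 T) :
    u t ≤ barrier p A B (t / 2) := by
  obtain ⟨δ, hδu, hδ : 0 < δ⟩ : ∃ δ, u (t / 2) ≤ barrier p A B δ ∧ δ ∈ Ioi 0 :=
    (((tendsto_barrier hp hA B).eventually_ge_atTop _).and self_mem_nhdsWithin).exists
  obtain ⟨a, ha⟩ : ∃ a, t / 2 - a = δ := ⟨t / 2 - δ, by ring⟩
  have hIcc : Icc (t / 2) t ⊆ Ioo 0 T := fun x hx =>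
    ⟨by linarith [ht.1, hx.1], hx.2.trans_lt ht.2⟩
  have hax : ∀ x ∈ Icc (t / 2) t, a < x := fun x hx => by linarith [hx.1]
  have hcomp := image_le_of_subsolution_of_strict_supersolution
    (F := fun v => -A * v ^ (p / (p - 1)) + B) (φ := fun s => barrier p A B (s - a))
    (fun x hx => hu x (hIcc hx)) (fun x hx => hasDerivAt_barrier_sub p A B (hax x hx))
    (fun x hx => hu' x (hIcc (Ico_subset_Icc_self hx)))
    (fun x hx => barrier_rpow_lt hp hA B (sub_pos.mpr (hax x (Ico_subset_Icc_self hx))))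
    (ha ▸ hδu) ⟨by linarith [ht.1], le_rfl⟩
  exact hcomp.trans (barrier_le_barrier hp hA B (by linarith [ht.1]) (by linarith))

end Hypercontractivity

open Hypercontractivity in
theorem le_mul_rpow_neg_add_of_deriv_le_neg_mul_rpow_add {p A : ℝ} (hp : 1 < p) (hA : 0 < A)
    (B : ℝ) :
    ∃ C : ℝ, 0 < C ∧ ∀ (T : ℝ) (u u' : ℝ → ℝ),
      (∀ t ∈ Ioo 0 T, HasDerivAt u (u' t) t) →
      (∀ t ∈ Ioo 0 T, u' t ≤ -A * u t ^ (p / (p - 1)) + B) →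
      ∀ t ∈ Ioo 0 T, u t ≤ C * t ^ (-(p - 1)) + C := by
  set C := max (barrierCoeff p A * 2 ^ (p - 1)) (barrierConst p A B)
  refine ⟨C, (barrierConst_pos hA B).trans_le (le_max_right _ _), fun T u u' hu hu' t ht => ?_⟩
  calc u t ≤ barrier p A B (t / 2) := le_barrier_half hp hA hu hu' ht
    _ = barrierCoeff p A * 2 ^ (p - 1) * t ^ (-(p - 1)) + barrierConst p A B :=
      barrier_half p A B ht.1
    _ ≤ C * t ^ (-(p - 1)) + C := by
      gcongr
      · exact (rpow_pos_of_pos ht.1 _).le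
      · exact le_max_left _ _
      · exact le_max_right _ _

theorem hypercontractivity_comparison_general (p M η K : ℝ)
    (hp : 1 < p) (hM : 0 < M) (hη : 0 < η) :
    ∃ C : ℝ, 0 < C ∧ ∀ (T : ℝ) (u u' : ℝ → ℝ),
      (∀ t ∈ Set.Ioo (0 : ℝ) T, 0 ≤ u t) →
      (∀ t ∈ Set.Ioo (0 : ℝ) T, HasDerivAt u (u' t) t) →
      (∀ t ∈ Set.Ioo (0 : ℝ) T,
        u' t ≤ -(4 * (p - 1) * η * M ^ (-(1 : ℝ) / (p - 1))) * u t ^ (p / (p - 1))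
                + 4 * K ^ p * M) →
      ∀ t ∈ Set.Ioo (0 : ℝ) T, u t ≤ C * t ^ (-(p - 1)) + C := by
  have hA : 0 < 4 * (p - 1) * η * M ^ (-(1 : ℝ) / (p - 1)) := by
    have := rpow_pos_of_pos hM (-(1 : ℝ) / (p - 1))
    have : 0 < p - 1 := by linarith
    positivity
  obtain ⟨C, hC, hbound⟩ := le_mul_rpow_neg_add_of_deriv_le_neg_mul_rpow_add hp hA (4 * K ^ p * M)
  exact ⟨C, hC, fun T u u' _ hu hu' => hbound T u u' hu hu'⟩

/-- Hypercontractivity comparison lemma: any nonnegative solution of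
`u' ≤ -A u^{p/(p-1)} + B` on `(0,T)`, with `A = 4(p-1)η M^{-1/(p-1)}` and `B = 4K^p M`,
satisfies `u(t) ≤ C t^{-(p-1)} + C` for a constant `C = C(A,B,p)` independent of the
initial datum. -/
theorem hypercontractivity_comparison (p M η K : ℝ)
    (hp : 1 < p) (hM : 0 < M) (hη : 0 < η) (hK : 0 < K) :
    ∃ C : ℝ, 0 < C ∧ ∀ (T : ℝ) (u u' : ℝ → ℝ),
      (∀ t ∈ Set.Ioo (0 : ℝ) T, 0 ≤ u t) →
      (∀ t ∈ Set.Ioo (0 : ℝ) T, HasDerivAt u (u' t) t) →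
      (∀ t ∈ Set.Ioo (0 : ℝ) T,
        u' t ≤ -(4 * (p - 1) * η * M ^ (-(1 : ℝ) / (p - 1))) * u t ^ (p / (p - 1))
                + 4 * K ^ p * M) →
      ∀ t ∈ Set.Ioo (0 : ℝ) T, u t ≤ C * t ^ (-(p - 1)) + C :=
  hypercontractivity_comparison_general p M η K hp hM hη
end

section
/- For d ≥ 3, the first blow-up condition ∫|x|² n₀ dx < K₁(d) M^{d/(d−2)} with K₁(d) = 2^{-d/(d−2)} (d|𝕊^{d−1}|)^{-2/(d−2)} implies ‖n₀‖_{L^{d/2}} > 8/(d C_S(d)²); i.e. the blow-up criterion is incompatible with the smallness condition ‖n₀‖_{L^{d/2}} < 8/(d C_S(d)²) for global existence. -/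
/-!
Split the mass `M` of `n₀` at a ball `B_R`. Hölder's inequality bounds the mass inside by
`‖n₀‖_{d/2} |B_R|^{1-2/d}` and Chebyshev's inequality bounds the mass outside by `I(0)/R²`.
For the radius with `2d|𝕊^{d-1}| R^{d-2} = M` the blow-up condition makes the outer mass smaller
than `M/2`, so the inner one exceeds `M/2`, which forces `‖n₀‖_{d/2} > d² ω_d^{2/d}` with
`ω_d = |𝕊^{d-1}|/d` the volume of the unit ball. Gautschi's inequality
`Γ(s + 1/2) ≤ Γ(s) √s` (log-convexity of `Γ`) bounds `|𝕊^d| / |𝕊^{d-1}|`, and with it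
`8/(d C_S(d)²) = 2(d-2)|𝕊^d|^{2/d} ≤ d² ω_d^{2/d}`.
-/

open MeasureTheory Real

/-- `|𝕊^{n-1}|`, the area of the unit sphere of `ℝⁿ`. -/
noncomputable def unitSphereArea (n : ℝ) : ℝ := 2 * π ^ (n / 2) / Gamma (n / 2)

/-- `C_S(d)²`, the square of the sharp Sobolev constant. -/
noncomputable def sobolevConstSq (d : ℝ) : ℝ :=
  4 / (d * (d - 2) * unitSphereArea (d + 1) ^ (2 / d))

/-- The constant `K₁(d)` of the blow-up criterion. -/
noncomputable def blowupConstant (d : ℝ) : ℝ :=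
  2 ^ (-d / (d - 2)) * (d * unitSphereArea d) ^ (-2 / (d - 2))

theorem unitSphereArea_pos {n : ℝ} (hn : 0 < n) : 0 < unitSphereArea n := by
  unfold unitSphereArea
  positivity

theorem Real.Gamma_add_half_le_Gamma_mul_sqrt {s : ℝ} (hs : 0 < s) :
    Gamma (s + 1 / 2) ≤ Gamma s * √s := by
  have h := Gamma_mul_add_mul_le_rpow_Gamma_mul_rpow_Gamma hs (by linarith : 0 < s + 1)
    (by norm_num : (0 : ℝ) < 1 / 2) (by norm_num : (0 : ℝ) < 1 / 2) (by norm_num)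
  rw [Gamma_add_one hs.ne', mul_rpow hs.le (Gamma_pos_of_pos hs).le, ← sqrt_eq_rpow,
    ← sqrt_eq_rpow] at h
  convert h using 1
  · ring_nf
  · linear_combination -√s * mul_self_sqrt (Gamma_pos_of_pos hs).le

theorem mul_unitSphereArea_add_one_div_le {d : ℝ} (hd : 0 < d) :
    d * unitSphereArea (d + 1) / unitSphereArea d ≤ √(2 * π * (d + 1)) := by
  have gautschi : d * Gamma (d / 2) ≤ 2 * Gamma ((d + 1) / 2) * √((d + 1) / 2) := by
    have h := Gamma_add_half_le_Gamma_mul_sqrt (s := (d + 1) / 2) (by linarith)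
    rw [show (d + 1) / 2 + 1 / 2 = d / 2 + 1 by ring, Gamma_add_one (by positivity)] at h
    linarith
  have hpow : π ^ ((d + 1) / 2) = π ^ (d / 2) * √π := by
    rw [sqrt_eq_rpow, ← rpow_add pi_pos]
    ring_nf
  have hsqrt : √(2 * π * (d + 1)) = √π * (2 * √((d + 1) / 2)) := by
    rw [show 2 * π * (d + 1) = π * (2 ^ 2 * ((d + 1) / 2)) by ring, sqrt_mul pi_pos.le,
      sqrt_mul (by positivity), sqrt_sq zero_le_two]
  unfold unitSphereArea
  rw [hpow, hsqrt, div_le_iff₀ (by positivity)]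
  calc d * (2 * (π ^ (d / 2) * √π) / Gamma ((d + 1) / 2))
      = √π * (d * Gamma (d / 2)) * (2 * π ^ (d / 2) / Gamma (d / 2)) / Gamma ((d + 1) / 2) := by
        field_simp
    _ ≤ √π * (2 * Gamma ((d + 1) / 2) * √((d + 1) / 2)) * (2 * π ^ (d / 2) / Gamma (d / 2))
          / Gamma ((d + 1) / 2) := by gcongr
    _ = _ := by field_simp

theorem two_mul_pi_mul_add_one_le_four_pow {d : ℕ} (hd : 3 ≤ d) :
    2 * π * (d + 1) ≤ 4 ^ d := by
  induction d, hd using Nat.le_induction with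
  | base => norm_num; nlinarith [pi_lt_four]
  | succ n _ ih =>
    push_cast [pow_succ]
    nlinarith [pi_pos]

theorem mul_unitSphereArea_add_one_div_rpow_le_four {d : ℕ} (hd : 3 ≤ d) :
    (d * unitSphereArea (d + 1) / unitSphereArea d) ^ ((2 : ℝ) / d) ≤ 4 := by
  have hd0 : (0 : ℝ) < d := by positivity
  have h0 : 0 ≤ (d : ℝ) * unitSphereArea (d + 1) / unitSphereArea d := by
    have := unitSphereArea_pos hd0
    have := unitSphereArea_pos (by linarith : (0 : ℝ) < d + 1)
    positivity
  calc (d * unitSphereArea (d + 1) / unitSphereArea d) ^ ((2 : ℝ) / d)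
      ≤ √(2 * π * (d + 1)) ^ ((2 : ℝ) / d) := by
        gcongr
        exact mul_unitSphereArea_add_one_div_le hd0
    _ = (2 * π * (d + 1)) ^ ((1 : ℝ) / d) := by
        rw [sqrt_eq_rpow, ← rpow_mul (by positivity)]
        ring_nf
    _ ≤ ((4 : ℝ) ^ d) ^ ((1 : ℝ) / d) := by
        gcongr
        exact two_mul_pi_mul_add_one_le_four_pow hd
    _ = 4 := by rw [one_div, pow_rpow_inv_natCast (by norm_num) (by positivity)]

theorem eight_div_mul_sobolevConstSq_le {d : ℕ} (hd : 3 ≤ d) :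
    8 / (d * sobolevConstSq d) ≤ d ^ 2 * (unitSphereArea d / d) ^ ((2 : ℝ) / d) := by
  have hd3 : (3 : ℝ) ≤ d := by exact_mod_cast hd
  have hσ := unitSphereArea_pos (by linarith : (0 : ℝ) < d)
  have hσ' := unitSphereArea_pos (by linarith : (0 : ℝ) < d + 1)
  have hlhs :
      8 / (d * sobolevConstSq d) = 2 * (d - 2) * unitSphereArea (d + 1) ^ ((2 : ℝ) / d) := by
    unfold sobolevConstSq
    field_simp
    ring
  have h4 := mul_unitSphereArea_add_one_div_rpow_le_four hd
  rw [div_rpow (by positivity) hσ.le, mul_rpow (by positivity) hσ'.le] at h4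
  rw [div_rpow hσ.le (by positivity)]
  set a := unitSphereArea d ^ ((2 : ℝ) / d)
  set b := (d : ℝ) ^ ((2 : ℝ) / d)
  have ha : 0 < a := rpow_pos_of_pos hσ _
  have hb : 0 < b := rpow_pos_of_pos (by linarith) _
  rw [div_le_iff₀ ha] at h4
  rw [hlhs, mul_div_assoc', le_div_iff₀ hb]
  nlinarith [mul_le_mul_of_nonneg_left h4 (by linarith : (0 : ℝ) ≤ 2 * (d - 2)),
    mul_nonneg ha.le (sq_nonneg ((d : ℝ) - 4))]

theorem setIntegral_le_eLpNorm_mul_measureReal_rpow {α : Type*} [MeasurableSpace α]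
    {μ : Measure α} {f : α → ℝ} {p : ENNReal} {s : Set α} (hp : 1 ≤ p) (hf : MemLp f p μ)
    (hs : μ s ≠ ⊤) :
    ∫ x in s, f x ∂μ ≤ (eLpNorm f p μ).toReal * μ.real s ^ (1 - 1 / p.toReal) := by
  have hf' := hf.aestronglyMeasurable.restrict (s := s)
  have hexp : 0 ≤ 1 - 1 / p.toReal := by
    rcases eq_or_ne p ⊤ with rfl | hp_top
    · simp
    · have h1 : 1 ≤ p.toReal := by simpa using ENNReal.toReal_mono hp_top hp
      exact sub_nonneg.2 (div_le_one_of_le₀ h1 (zero_le_one.trans h1))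
  have holder := eLpNorm_le_eLpNorm_mul_rpow_measure_univ hp hf'
  rw [ENNReal.toReal_one, div_one, Measure.restrict_apply_univ] at holder
  calc ∫ x in s, f x ∂μ ≤ ∫ x in s, ‖f x‖ ∂μ :=
        (Real.le_norm_self _).trans (norm_integral_le_integral_norm _)
    _ = (eLpNorm f 1 (μ.restrict s)).toReal := by
        rw [integral_norm_eq_lintegral_enorm hf', eLpNorm_one_eq_lintegral_enorm]
    _ ≤ (eLpNorm f p (μ.restrict s)).toReal * μ.real s ^ (1 - 1 / p.toReal) := by
        rw [measureReal_def, ENNReal.toReal_rpow, ← ENNReal.toReal_mul]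
        exact ENNReal.toReal_mono (ENNReal.mul_ne_top (hf.restrict s).eLpNorm_ne_top
          (ENNReal.rpow_ne_top_of_nonneg hexp hs)) holder
    _ ≤ _ := by
        gcongr
        · exact hf.eLpNorm_ne_top
        · exact Measure.restrict_le_self

theorem setIntegral_compl_ball_le_integral_sq_norm_mul_div {E : Type*} [NormedAddCommGroup E]
    [MeasurableSpace E] [OpensMeasurableSpace E] {μ : Measure E} {f : E → ℝ} (hf0 : 0 ≤ f)
    (hf : Integrable f μ) (hmom : Integrable (fun x => ‖x‖ ^ 2 * f x) μ) {R : ℝ}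
    (hR : 0 < R) :
    ∫ x in (Metric.ball 0 R)ᶜ, f x ∂μ ≤ (∫ x, ‖x‖ ^ 2 * f x ∂μ) / R ^ 2 := by
  have hmom' := hmom.div_const (R ^ 2)
  have hpointwise : ∀ x ∈ (Metric.ball (0 : E) R)ᶜ, f x ≤ ‖x‖ ^ 2 * f x / R ^ 2 := by
    intro x hx
    have hxR : R ≤ ‖x‖ := by simpa using hx
    rw [le_div_iff₀ (by positivity), mul_comm (‖x‖ ^ 2)]
    exact mul_le_mul_of_nonneg_left (pow_le_pow_left₀ hR.le hxR 2) (hf0 x)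
  calc ∫ x in (Metric.ball 0 R)ᶜ, f x ∂μ
        ≤ ∫ x in (Metric.ball 0 R)ᶜ, ‖x‖ ^ 2 * f x / R ^ 2 ∂μ :=
        setIntegral_mono_on hf.integrableOn hmom'.integrableOn measurableSet_ball.compl hpointwise
    _ ≤ ∫ x, ‖x‖ ^ 2 * f x / R ^ 2 ∂μ :=
        setIntegral_le_integral hmom' (.of_forall fun x =>
          div_nonneg (mul_nonneg (sq_nonneg _) (hf0 x)) (sq_nonneg R))
    _ = (∫ x, ‖x‖ ^ 2 * f x ∂μ) / R ^ 2 := integral_div _ _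

theorem EuclideanSpace.volume_real_ball_zero {d : ℕ} (hd : 0 < d) {R : ℝ} (hR : 0 ≤ R) :
    volume.real (Metric.ball (0 : EuclideanSpace ℝ (Fin d)) R)
      = unitSphereArea d / d * R ^ d := by
  have : Nonempty (Fin d) := ⟨⟨0, hd⟩⟩
  have hd0 : (d : ℝ) / 2 ≠ 0 := by positivity
  have hunit : √π ^ d / Gamma (d / 2 + 1) = unitSphereArea d / d := by
    rw [← rpow_natCast, sqrt_eq_rpow, ← rpow_mul pi_pos.le, Gamma_add_one hd0, unitSphereArea]
    field_simp
  have hpos : 0 < unitSphereArea d / d :=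
    div_pos (unitSphereArea_pos (by positivity)) (by positivity)
  rw [measureReal_def, EuclideanSpace.volume_ball, Fintype.card_fin, hunit, ENNReal.toReal_mul,
    ENNReal.toReal_pow, ENNReal.toReal_ofReal hR, ENNReal.toReal_ofReal hpos.le, mul_comm]

theorem blowupConstant_mul_rpow {d : ℝ} (hd : 2 < d) {R : ℝ} (hR : 0 ≤ R) :
    blowupConstant d * (2 * (d * unitSphereArea d) * R ^ (d - 2)) ^ (d / (d - 2))
      = d * unitSphereArea d * R ^ d := by
  have hc : 0 < d * unitSphereArea d := mul_pos (by linarith) (unitSphereArea_pos (by linarith))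
  have hd2 : d - 2 ≠ 0 := by linarith
  unfold blowupConstant
  rw [mul_rpow (by positivity) (rpow_nonneg hR _), mul_rpow zero_le_two hc.le, ← rpow_mul hR,
    mul_div_cancel₀ _ hd2]
  calc 2 ^ (-d / (d - 2)) * (d * unitSphereArea d) ^ (-2 / (d - 2)) *
        (2 ^ (d / (d - 2)) * (d * unitSphereArea d) ^ (d / (d - 2)) * R ^ d)
      = 2 ^ (-d / (d - 2) + d / (d - 2)) *
          (d * unitSphereArea d) ^ (-2 / (d - 2) + d / (d - 2)) * R ^ d := by
        rw [rpow_add two_pos, rpow_add hc]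
        ring
    _ = d * unitSphereArea d * R ^ d := by
        rw [show -d / (d - 2) + d / (d - 2) = 0 by ring,
          show -2 / (d - 2) + d / (d - 2) = 1 by field_simp; ring, rpow_zero, rpow_one, one_mul]

theorem lt_eLpNorm_of_integral_sq_norm_mul_lt {d : ℕ} (hd : 3 ≤ d)
    {f : EuclideanSpace ℝ (Fin d) → ℝ} (hf0 : 0 ≤ f) (hf : Integrable f)
    (hmom : Integrable fun x => ‖x‖ ^ 2 * f x) (hLp : MemLp f (ENNReal.ofReal ((d : ℝ) / 2)))
    (hblowup : ∫ x, ‖x‖ ^ 2 * f x < blowupConstant d * (∫ x, f x) ^ ((d : ℝ) / (d - 2))) :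
    (d : ℝ) ^ 2 * (unitSphereArea d / d) ^ ((2 : ℝ) / d)
      < (eLpNorm f (ENNReal.ofReal ((d : ℝ) / 2))).toReal := by
  have hd3 : (3 : ℝ) ≤ d := by exact_mod_cast hd
  set M := ∫ x, f x
  set N := (eLpNorm f (ENNReal.ofReal ((d : ℝ) / 2))).toReal
  set ω := unitSphereArea d / d with hωdef
  have hσ : 0 < unitSphereArea d := unitSphereArea_pos (by linarith)
  have hω : 0 < ω := div_pos hσ (by linarith)
  have hM : 0 < M := by
    refine (integral_nonneg hf0).lt_of_ne fun hM0 => ?_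
    rw [show M = 0 from hM0.symm, zero_rpow (div_pos (by linarith) (by linarith)).ne',
      mul_zero] at hblowup
    exact hblowup.not_ge (integral_nonneg fun x => mul_nonneg (sq_nonneg _) (hf0 x))
  -- The radius that makes both the ball term and the tail term below equal to `M / 2`.
  set R := (M / (2 * (d * unitSphereArea d))) ^ ((1 : ℝ) / (d - 2))
  have hR : 0 < R := rpow_pos_of_pos (by positivity) _
  have hRM : 2 * (d * unitSphereArea d) * R ^ ((d : ℝ) - 2) = M := by
    rw [← rpow_mul (by positivity), one_div_mul_cancel (by linarith), rpow_one]
    field_simp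
  by_contra! hN
  have hball : ∫ x in Metric.ball 0 R, f x ≤ M / 2 := calc
    ∫ x in Metric.ball 0 R, f x
        ≤ N * volume.real (Metric.ball (0 : EuclideanSpace ℝ (Fin d)) R)
            ^ (1 - 1 / (ENNReal.ofReal ((d : ℝ) / 2)).toReal) :=
      setIntegral_le_eLpNorm_mul_measureReal_rpow (ENNReal.one_le_ofReal.2 (by linarith)) hLp
        measure_ball_lt_top.ne
    _ = N * (ω * R ^ d) ^ (1 - (2 : ℝ) / d) := by
      rw [EuclideanSpace.volume_real_ball_zero (by omega) hR.le,
        ENNReal.toReal_ofReal (by positivity), one_div_div]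
    _ ≤ d ^ 2 * ω ^ ((2 : ℝ) / d) * (ω * R ^ d) ^ (1 - (2 : ℝ) / d) := by gcongr
    _ = M / 2 := by
      have hωω : ω ^ ((2 : ℝ) / d) * ω ^ (1 - (2 : ℝ) / d) = ω := by
        rw [← rpow_add hω, add_sub_cancel, rpow_one]
      rw [← hRM, mul_rpow hω.le (by positivity), ← rpow_natCast R d, ← rpow_mul hR.le,
        mul_one_sub, mul_div_cancel₀ _ (by positivity)]
      calc _ = (d : ℝ) ^ 2 * (ω ^ ((2 : ℝ) / d) * ω ^ (1 - (2 : ℝ) / d))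
              * R ^ ((d : ℝ) - 2) := by ring
        _ = _ := by
            rw [hωω, hωdef]
            field_simp
  have htail : ∫ x in (Metric.ball 0 R)ᶜ, f x < M / 2 := calc
    ∫ x in (Metric.ball 0 R)ᶜ, f x ≤ (∫ x, ‖x‖ ^ 2 * f x) / R ^ 2 :=
      setIntegral_compl_ball_le_integral_sq_norm_mul_div hf0 hf hmom hR
    _ < blowupConstant d * M ^ ((d : ℝ) / (d - 2)) / R ^ 2 := by gcongr
    _ = M / 2 := by
      rw [← hRM, blowupConstant_mul_rpow (by linarith) hR.le, rpow_sub hR, rpow_two]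
      field_simp
  have hsplit := integral_add_compl (measurableSet_ball (x := (0 : EuclideanSpace ℝ (Fin d)))
    (ε := R)) hf
  linarith

/-- Incompatibility of the first blow-up criterion with the smallness condition for
global existence: if `∫|x|² n₀ < K₁(d) M^{d/(d-2)}` with
`K₁(d) = 2^{-d/(d-2)} (d|𝕊^{d-1}|)^{-2/(d-2)}`, then
`‖n₀‖_{L^{d/2}} > 8/(d C_S(d)²)`, where `C_S(d)² = 4/(d(d-2)|𝕊^d|^{2/d})`,
`|𝕊^{d-1}| = 2π^{d/2}/Γ(d/2)` and `|𝕊^d| = 2π^{(d+1)/2}/Γ((d+1)/2)`. -/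
theorem blowup_incompatible_with_smallness (d : ℕ) (hd : 3 ≤ d)
    (n₀ : EuclideanSpace ℝ (Fin d) → ℝ)
    (h_nonneg : ∀ x, 0 ≤ n₀ x)
    (h_int : Integrable n₀)
    (h_mom : Integrable (fun x => ‖x‖ ^ 2 * n₀ x))
    (h_Lp : MemLp n₀ (ENNReal.ofReal ((d : ℝ) / 2)))
    (M : ℝ) (hM : M = ∫ x, n₀ x)
    (h_blowup : ∫ x, ‖x‖ ^ 2 * n₀ x
        < (2 : ℝ) ^ (-(d : ℝ) / ((d : ℝ) - 2)) *
          ((d : ℝ) * (2 * Real.pi ^ ((d : ℝ) / 2) / Real.Gamma ((d : ℝ) / 2)))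
            ^ (-(2 : ℝ) / ((d : ℝ) - 2)) *
          M ^ ((d : ℝ) / ((d : ℝ) - 2))) :
    (eLpNorm n₀ (ENNReal.ofReal ((d : ℝ) / 2)) volume).toReal
      > 8 / ((d : ℝ) * (4 / ((d : ℝ) * ((d : ℝ) - 2) *
          (2 * Real.pi ^ (((d : ℝ) + 1) / 2) / Real.Gamma (((d : ℝ) + 1) / 2))
            ^ ((2 : ℝ) / d)))) := by
  have h_blowup' :
      ∫ x, ‖x‖ ^ 2 * n₀ x < blowupConstant d * (∫ x, n₀ x) ^ ((d : ℝ) / (d - 2)) :=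
    hM ▸ h_blowup
  exact (eight_div_mul_sobolevConstSq_le hd).trans_lt
    (lt_eLpNorm_of_integral_sq_norm_mul_lt hd h_nonneg h_int h_mom h_Lp h_blowup')
end

section
/- For all u, v > 0 and γ ∈ (0,1): 2u^{-2γ-2} + 2v^{-2γ-2} − 2u^{-γ-1}v^{-γ-1} + (u+v)^{-γ-1}(u^{-γ-1} + v^{-γ-1}) ≤ (u^{-γ} + v^{-γ})(2u^{-γ-2} + 2v^{-γ-2} − u^{-γ-1}v^{-1} − u^{-1}v^{-γ-1}). -/
open Real

private lemma key_GNS (u v p q : ℝ) (hu : 0 < u) (hv : 0 < v) (hp : 0 < p) (hq : 0 < q)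
    (h1 : q ≤ p) (h2 : u * p ≤ v * q) (huv : u ≤ v) :
    2 * (p * u⁻¹) * (p * u⁻¹) + 2 * (q * v⁻¹) * (q * v⁻¹)
        - 2 * (p * u⁻¹) * (q * v⁻¹) + q * v⁻¹ * (p * u⁻¹ + q * v⁻¹)
      ≤ (p + q) * (2 * (p * u⁻¹ * u⁻¹) + 2 * (q * v⁻¹ * v⁻¹)
          - p * u⁻¹ * v⁻¹ - u⁻¹ * (q * v⁻¹)) := by
  have hpoly : 2 * p ^ 2 * v ^ 2 + 2 * q ^ 2 * u ^ 2 - 2 * p * q * u * v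
      + q * u * (p * v + q * u)
      ≤ (p + q) * (2 * p * v ^ 2 + 2 * q * u ^ 2 - p * u * v - q * u * v) := by
    have c1 : (0:ℝ) ≤ q * (v - u) * (v * q - u * p) :=
      mul_nonneg (mul_nonneg hq.le (by linarith)) (by linarith)
    have c2 : (0:ℝ) ≤ v * (p - q) * (2 * v * q - u * p) :=
      mul_nonneg (mul_nonneg hv.le (by linarith)) (by nlinarith [mul_pos hv hq])
    have c3 : (0:ℝ) ≤ q ^ 2 * u * (v - u) :=
      mul_nonneg (mul_nonneg (by positivity) hu.le) (by linarith)
    nlinarith [c1, c2, c3]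
  have eL : 2 * (p * u⁻¹) * (p * u⁻¹) + 2 * (q * v⁻¹) * (q * v⁻¹)
        - 2 * (p * u⁻¹) * (q * v⁻¹) + q * v⁻¹ * (p * u⁻¹ + q * v⁻¹)
      = (2 * p ^ 2 * v ^ 2 + 2 * q ^ 2 * u ^ 2 - 2 * p * q * u * v
          + q * u * (p * v + q * u)) / (u ^ 2 * v ^ 2) := by
    field_simp
  have eR : (p + q) * (2 * (p * u⁻¹ * u⁻¹) + 2 * (q * v⁻¹ * v⁻¹)
          - p * u⁻¹ * v⁻¹ - u⁻¹ * (q * v⁻¹))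
      = (p + q) * (2 * p * v ^ 2 + 2 * q * u ^ 2 - p * u * v - q * u * v)
          / (u ^ 2 * v ^ 2) := by
    field_simp
  rw [eL, eR]
  exact (div_le_div_iff_of_pos_right (by positivity)).mpr hpoly

/-- Discrete Gagliardo–Nirenberg-type inequality (eq:discrete GNS): for `u, v > 0` and
`γ ∈ (0,1)`,
`2u^{-2γ-2} + 2v^{-2γ-2} - 2u^{-γ-1}v^{-γ-1} + (u+v)^{-γ-1}(u^{-γ-1} + v^{-γ-1})
  ≤ (u^{-γ} + v^{-γ})(2u^{-γ-2} + 2v^{-γ-2} - u^{-γ-1}v⁻¹ - u⁻¹v^{-γ-1})`. -/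
theorem discrete_GNS (u v γ : ℝ) (hu : 0 < u) (hv : 0 < v)
    (hγ0 : 0 < γ) (hγ1 : γ < 1) :
    2 * u ^ (-2 * γ - 2) + 2 * v ^ (-2 * γ - 2)
        - 2 * u ^ (-γ - 1) * v ^ (-γ - 1)
        + (u + v) ^ (-γ - 1) * (u ^ (-γ - 1) + v ^ (-γ - 1))
      ≤ (u ^ (-γ) + v ^ (-γ)) *
          (2 * u ^ (-γ - 2) + 2 * v ^ (-γ - 2)
            - u ^ (-γ - 1) * v⁻¹ - u⁻¹ * v ^ (-γ - 1)) := by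
  wlog huv : u ≤ v generalizing u v with H
  · have h := H v u hv hu (le_of_not_ge huv)
    rw [add_comm v u] at h
    refine le_trans (le_of_eq ?_) (le_trans h (le_of_eq ?_)) <;> ring
  -- abbreviations
  have hP : (0:ℝ) < u ^ (-γ) := rpow_pos_of_pos hu _
  have hQ : (0:ℝ) < v ^ (-γ) := rpow_pos_of_pos hv _
  have hPQ : v ^ (-γ) ≤ u ^ (-γ) := rpow_le_rpow_of_nonpos hu huv (by linarith)
  have h2 : u * u ^ (-γ) ≤ v * v ^ (-γ) := by
    have h := rpow_le_rpow hu.le huv (by linarith : (0:ℝ) ≤ 1 - γ)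
    rwa [show (1 - γ : ℝ) = 1 + (-γ) by ring, rpow_add hu, rpow_add hv, rpow_one, rpow_one] at h
  -- rewrite rpow expressions
  have eu1 : u ^ (-γ - 1) = u ^ (-γ) * u⁻¹ := by
    rw [show (-γ - 1 : ℝ) = -γ + (-1) by ring, rpow_add hu, rpow_neg_one]
  have ev1 : v ^ (-γ - 1) = v ^ (-γ) * v⁻¹ := by
    rw [show (-γ - 1 : ℝ) = -γ + (-1) by ring, rpow_add hv, rpow_neg_one]
  have eu2 : u ^ (-γ - 2) = u ^ (-γ) * u⁻¹ * u⁻¹ := by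
    rw [show (-γ - 2 : ℝ) = -γ + (-1) + (-1) by ring, rpow_add hu, rpow_add hu, rpow_neg_one]
  have ev2 : v ^ (-γ - 2) = v ^ (-γ) * v⁻¹ * v⁻¹ := by
    rw [show (-γ - 2 : ℝ) = -γ + (-1) + (-1) by ring, rpow_add hv, rpow_add hv, rpow_neg_one]
  have eu3 : u ^ (-2 * γ - 2) = (u ^ (-γ) * u⁻¹) * (u ^ (-γ) * u⁻¹) := by
    rw [show (-2 * γ - 2 : ℝ) = (-γ - 1) + (-γ - 1) by ring, rpow_add hu, eu1]
  have ev3 : v ^ (-2 * γ - 2) = (v ^ (-γ) * v⁻¹) * (v ^ (-γ) * v⁻¹) := by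
    rw [show (-2 * γ - 2 : ℝ) = (-γ - 1) + (-γ - 1) by ring, rpow_add hv, ev1]
  have hbound : (u + v) ^ (-γ - 1) ≤ v ^ (-γ - 1) :=
    rpow_le_rpow_of_nonpos hv (by linarith) (by linarith)
  have hsum : (0:ℝ) ≤ u ^ (-γ - 1) + v ^ (-γ - 1) := by positivity
  have hmul : (u + v) ^ (-γ - 1) * (u ^ (-γ - 1) + v ^ (-γ - 1))
      ≤ v ^ (-γ - 1) * (u ^ (-γ - 1) + v ^ (-γ - 1)) :=
    mul_le_mul_of_nonneg_right hbound hsum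
  have hkey := key_GNS u v (u ^ (-γ)) (v ^ (-γ)) hu hv hP hQ hPQ h2 huv
  rw [eu1, ev1, eu2, ev2, eu3, ev3] at *
  linarith [hmul, hkey]
end

section
/- Let X = (u,v) with u, v > 0, γ ∈ (0,1), χ > 0, and define W_γ(u,v) = (χ/γ)(u^{-γ} + v^{-γ} + (u+v)^{-γ}) and |X|² = (u² + v² + (u+v)²)/3. Then W_γ(u,v) ≥ (3χ/γ)|X|^{-γ}. Consequently, if a C¹ curve (u(t),v(t)) satisfies (1/2) d/dt |X(t)|² = 2 − γ W_γ(u(t),v(t)) and the initial datum satisfies |X(0)| < (3χ/2)^{1/γ}, then |X(t)| vanishes in finite time (blow-up of the discrete model). -/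
open Real

/-- Squared euclidean norm `|X|² = (u² + v² + (u+v)²)/3` of the discrete configuration. -/
noncomputable def discNormSq (u v : ℝ) : ℝ := (u ^ 2 + v ^ 2 + (u + v) ^ 2) / 3

/-- Discrete interaction functional `W_γ(u,v) = (χ/γ)(u^{-γ} + v^{-γ} + (u+v)^{-γ})`. -/
noncomputable def discW (γ χ u v : ℝ) : ℝ :=
  χ / γ * (u ^ (-γ) + v ^ (-γ) + (u + v) ^ (-γ))

/-- Bernoulli-type tangent-line inequality for negative exponents `-1 < p < 0`. -/
lemma bern_neg {t p : ℝ} (ht : 0 < t) (hp0 : -1 < p) (hp1 : p < 0) :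
    1 + p * (t - 1) ≤ t ^ p := by
  obtain ⟨q, hq⟩ : ∃ q : ℝ, q = -p := ⟨-p, rfl⟩
  have hq0 : 0 < q := by rw [hq]; linarith
  have hq1 : q < 1 := by rw [hq]; linarith
  have h1 : t ^ q ≤ 1 + q * (t - 1) := by
    have := rpow_one_add_le_one_add_mul_self (s := t - 1) (p := q) (by linarith) hq0.le hq1.le
    simpa using this
  have htq : 0 < t ^ q := Real.rpow_pos_of_pos ht q
  have hq2 : 0 < 1 + q * (t - 1) := lt_of_lt_of_le htq h1
  have h2 : t ^ p = (t ^ q)⁻¹ := by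
    rw [hq, Real.rpow_neg ht.le, inv_inv]
  have h3 : (1 + q * (t - 1))⁻¹ ≤ (t ^ q)⁻¹ := inv_anti₀ htq h1
  have h4 : 1 - q * (t - 1) ≤ (1 + q * (t - 1))⁻¹ := by
    rw [inv_eq_one_div, le_div_iff₀ hq2]
    nlinarith [sq_nonneg (q * (t - 1))]
  have h5 : 1 + p * (t - 1) = 1 - q * (t - 1) := by rw [hq]; ring
  rw [h2, h5]; linarith

/-- Three-point Jensen inequality for the convex power function with negative exponent. -/
lemma jensen3 {a b c p : ℝ} (ha : 0 < a) (hb : 0 < b) (hc : 0 < c)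
    (hp0 : -1 < p) (hp1 : p < 0) :
    3 * ((a + b + c) / 3) ^ p ≤ a ^ p + b ^ p + c ^ p := by
  set m : ℝ := (a + b + c) / 3 with hm
  have hm0 : 0 < m := by positivity
  have hmp : 0 < m ^ p := Real.rpow_pos_of_pos hm0 p
  have key : ∀ x : ℝ, 0 < x → m ^ p * (1 + p * (x / m - 1)) ≤ x ^ p := by
    intro x hx
    have hb := bern_neg (div_pos hx hm0) hp0 hp1
    have he : m ^ p * (x / m) ^ p = x ^ p := by
      rw [← Real.mul_rpow hm0.le (div_pos hx hm0).le, mul_div_cancel₀ _ hm0.ne']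
    calc m ^ p * (1 + p * (x / m - 1)) ≤ m ^ p * (x / m) ^ p :=
          mul_le_mul_of_nonneg_left hb hmp.le
      _ = x ^ p := he
  have e : m ^ p * (1 + p * (a / m - 1)) + m ^ p * (1 + p * (b / m - 1))
      + m ^ p * (1 + p * (c / m - 1)) = 3 * m ^ p := by
    have h3 : a / m + b / m + c / m = 3 := by
      field_simp [hm]; ring
    linear_combination m ^ p * p * h3
  linarith [key a ha, key b hb, key c hc]

/-- The Jensen-type lower bound `(3χ/γ)|X|^{-γ} ≤ W_γ(u,v)`. -/
lemma discW_lower (γ χ : ℝ) (hγ0 : 0 < γ) (hγ1 : γ < 1) (hχ : 0 < χ)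
    (u v : ℝ) (hu : 0 < u) (hv : 0 < v) :
    3 * χ / γ * (discNormSq u v) ^ (-γ / 2) ≤ discW γ χ u v := by
  have hp0 : -1 < -γ / 2 := by linarith
  have hp1 : -γ / 2 < 0 := by linarith
  have huv : 0 < u + v := by linarith
  have e : ∀ x : ℝ, 0 < x → (x ^ 2) ^ (-γ / 2) = x ^ (-γ) := by
    intro x hx
    rw [← Real.rpow_natCast x 2, ← Real.rpow_mul hx.le]
    congr 1
    push_cast
    ring
  have hj := jensen3 (pow_pos hu 2) (pow_pos hv 2) (pow_pos huv 2) hp0 hp1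
  rw [e u hu, e v hv, e (u + v) huv] at hj
  unfold discNormSq discW
  have hcg : (0:ℝ) ≤ χ / γ := by positivity
  calc 3 * χ / γ * ((u ^ 2 + v ^ 2 + (u + v) ^ 2) / 3) ^ (-γ / 2)
      = χ / γ * (3 * ((u ^ 2 + v ^ 2 + (u + v) ^ 2) / 3) ^ (-γ / 2)) := by ring
    _ ≤ χ / γ * (u ^ (-γ) + v ^ (-γ) + (u + v) ^ (-γ)) :=
        mul_le_mul_of_nonneg_left hj hcg

/-- First blow-up criterion for the discrete three-point Keller–Segel model:
`W_γ(u,v) ≥ (3χ/γ)|X|^{-γ}`; consequently, any positive `C¹` trajectory with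
`(1/2) d/dt |X(t)|² = 2 - γ W_γ(u(t),v(t))` and `|X(0)| < (3χ/2)^{1/γ}` cannot exist
for all time: `|X(t)|` vanishes in finite time. -/
theorem discrete_first_blowup (γ χ : ℝ) (hγ0 : 0 < γ) (hγ1 : γ < 1) (hχ : 0 < χ) :
    (∀ u v : ℝ, 0 < u → 0 < v →
      3 * χ / γ * (discNormSq u v) ^ (-γ / 2) ≤ discW γ χ u v)
    ∧ (∀ (u v N' : ℝ → ℝ),
        (∀ t, 0 ≤ t → 0 < u t) → (∀ t, 0 ≤ t → 0 < v t) →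
        (∀ t, 0 ≤ t → HasDerivAt (fun s => discNormSq (u s) (v s)) (N' t) t) →
        (∀ t, 0 ≤ t → N' t / 2 = 2 - γ * discW γ χ (u t) (v t)) →
        discNormSq (u 0) (v 0) < ((3 * χ / 2) ^ (1 / γ)) ^ 2 →
        False) := by
  constructor
  · exact fun u v hu hv => discW_lower γ χ hγ0 hγ1 hχ u v hu hv
  intro u v N' hu hv hD hE hI
  set f : ℝ → ℝ := fun t => discNormSq (u t) (v t) with hf
  have hNpos : ∀ t, 0 ≤ t → 0 < f t := by
    intro t ht
    have h1 : 0 < (u t) ^ 2 := pow_pos (hu t ht) 2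
    have h2 : (0:ℝ) ≤ (v t) ^ 2 := sq_nonneg _
    have h3 : (0:ℝ) ≤ (u t + v t) ^ 2 := sq_nonneg _
    simp only [hf, discNormSq]
    linarith
  obtain ⟨N0, hN0def⟩ : ∃ N0 : ℝ, N0 = f 0 := ⟨_, rfl⟩
  have hN00 : 0 < N0 := hN0def ▸ hNpos 0 le_rfl
  -- derivative bound
  have hbound : ∀ t, 0 ≤ t → N' t ≤ 4 - 6 * χ * (f t) ^ (-γ / 2) := by
    intro t ht
    have hW := discW_lower γ χ hγ0 hγ1 hχ (u t) (v t) (hu t ht) (hv t ht)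
    have hE' := hE t ht
    have hγ' : γ ≠ 0 := hγ0.ne'
    have h2 : 3 * χ * (f t) ^ (-γ / 2) ≤ γ * discW γ χ (u t) (v t) := by
      have hmul := mul_le_mul_of_nonneg_left hW hγ0.le
      calc 3 * χ * (f t) ^ (-γ / 2)
          = γ * (3 * χ / γ * (discNormSq (u t) (v t)) ^ (-γ / 2)) := by
            rw [hf]; field_simp
        _ ≤ γ * discW γ χ (u t) (v t) := hmul
    linarith
  -- the barrier constant
  have hB : N0 ^ (γ / 2) < 3 * χ / 2 := by
    have h1 : (0:ℝ) < 3 * χ / 2 := by linarith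
    have h2 : N0 < ((3 * χ / 2) ^ (1 / γ)) ^ 2 := by rw [hN0def]; exact hI
    have h3 : N0 ^ (γ / 2) < (((3 * χ / 2) ^ (1 / γ)) ^ 2) ^ (γ / 2) :=
      Real.rpow_lt_rpow hN00.le h2 (by positivity)
    have h4 : ((((3 * χ / 2) ^ (1 / γ)) ^ 2 : ℝ)) ^ (γ / 2) = 3 * χ / 2 := by
      rw [← Real.rpow_natCast ((3 * χ / 2) ^ (1 / γ)) 2, ← Real.rpow_mul h1.le,
        ← Real.rpow_mul h1.le]
      have he : 1 / γ * ((2:ℕ):ℝ) * (γ / 2) = 1 := by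
        push_cast
        field_simp
      rw [he, Real.rpow_one]
    rw [h4] at h3; exact h3
  have hNγ : 0 < N0 ^ (γ / 2) := Real.rpow_pos_of_pos hN00 _
  have hneg : N0 ^ (-γ / 2) = (N0 ^ (γ / 2))⁻¹ := by
    rw [show (-γ / 2 : ℝ) = -(γ / 2) by ring, Real.rpow_neg hN00.le]
  have hc4 : 4 < 6 * χ * N0 ^ (-γ / 2) := by
    have hinv : (3 * χ / 2)⁻¹ < (N0 ^ (γ / 2))⁻¹ := by
      apply inv_strictAnti₀ hNγ hB
    have h6 : 6 * χ * (3 * χ / 2)⁻¹ = 4 := by field_simp; ring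
    rw [hneg]
    calc (4:ℝ) = 6 * χ * (3 * χ / 2)⁻¹ := h6.symm
      _ < 6 * χ * (N0 ^ (γ / 2))⁻¹ := by
          apply mul_lt_mul_of_pos_left hinv (by positivity)
  obtain ⟨c, hcdef⟩ : ∃ c : ℝ, c = 6 * χ * N0 ^ (-γ / 2) - 4 := ⟨_, rfl⟩
  have hc : 0 < c := by rw [hcdef]; linarith
  -- Step A : derivative bound away from zero while f ≤ N0
  have hA : ∀ t, 0 ≤ t → f t ≤ N0 → N' t ≤ -c := by
    intro t ht hle
    have h1 := hbound t ht
    have h2 : N0 ^ (-γ / 2) ≤ (f t) ^ (-γ / 2) :=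
      Real.rpow_le_rpow_of_nonpos (hNpos t ht) hle (by linarith)
    have h3 : 6 * χ * N0 ^ (-γ / 2) ≤ 6 * χ * (f t) ^ (-γ / 2) :=
      mul_le_mul_of_nonneg_left h2 (by positivity)
    rw [hcdef]; linarith
  -- Step C : f stays below N0
  have hC : ∀ T, 0 ≤ T → f T ≤ N0 := by
    intro T hT
    have hsub : Set.Icc (0:ℝ) T ⊆ {t | f t ≤ N0} := by
      apply IsClosed.Icc_subset_of_forall_exists_gt
      · have hcont : ContinuousOn f (Set.Icc 0 T) := fun x hx =>
          ((hD x hx.1).continuousAt).continuousWithinAt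
        have hcl := hcont.preimage_isClosed_of_isClosed isClosed_Icc (isClosed_Iic (a := N0))
        have : {t | f t ≤ N0} ∩ Set.Icc 0 T = Set.Icc 0 T ∩ f ⁻¹' Set.Iic N0 := by
          ext x; simp [Set.mem_inter_iff, and_comm]
        rw [this]; exact hcl
      · simpa using hN0def.ge
      · rintro x ⟨hxs, hx0, hxT⟩ y hy
        have hlt : N' x < 0 := lt_of_le_of_lt (hA x hx0 hxs) (by linarith)
        have hslope := hasDerivAt_iff_tendsto_slope.mp (hD x hx0)
        have hmem : slope f x ⁻¹' Set.Iio 0 ∈ nhdsWithin x {x}ᶜ :=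
          hslope (Iio_mem_nhds hlt)
        have hle' : nhdsWithin x (Set.Ioi x) ≤ nhdsWithin x {x}ᶜ :=
          nhdsWithin_mono x (fun z hz => ne_of_gt hz)
        have hev1 : ∀ᶠ z in nhdsWithin x (Set.Ioi x), slope f x z < 0 := hle' hmem
        have hev2 : Set.Ioc x y ∈ nhdsWithin x (Set.Ioi x) :=
          Ioc_mem_nhdsGT_of_mem ⟨le_rfl, hy⟩
        obtain ⟨z, hz1, hz2⟩ := (hev1.and (Filter.eventually_of_mem hev2 fun z hz => hz)).exists
        refine ⟨z, ?_, hz2⟩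
        have hzx : 0 < z - x := sub_pos.2 hz2.1
        have hsl : (f z - f x) / (z - x) < 0 := by
          have := hz1
          rwa [slope_def_field] at this
        have hnum : f z - f x < 0 := by
          by_contra h
          push_neg at h
          have : 0 ≤ (f z - f x) / (z - x) := div_nonneg h hzx.le
          linarith
        have hxs' : f x ≤ N0 := hxs
        show f z ≤ N0
        linarith
    exact hsub ⟨hT, le_rfl⟩
  -- Step D : linear decay
  have hsum : ∀ x : ℝ, 0 ≤ x → HasDerivAt (fun s => f s + c * s) (N' x + c * 1) x :=
    fun x hx => (hD x hx).add ((hasDerivAt_id x).const_mul c)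
  have hanti : AntitoneOn (fun t => f t + c * t) (Set.Ici (0:ℝ)) := by
    apply antitoneOn_of_deriv_nonpos (convex_Ici 0)
    · exact fun x hx => (hsum x hx).continuousAt.continuousWithinAt
    · rw [interior_Ici]
      exact fun x hx => (hsum x (le_of_lt hx)).differentiableAt.differentiableWithinAt
    · intro x hx
      rw [interior_Ici] at hx
      rw [(hsum x hx.le).deriv]
      have := hA x hx.le (hC x hx.le)
      linarith
  obtain ⟨T, hTdef⟩ : ∃ T : ℝ, T = (N0 + 1) / c := ⟨_, rfl⟩
  have hT0 : 0 ≤ T := by rw [hTdef]; positivity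
  have hle := hanti (Set.self_mem_Ici) (Set.mem_Ici.mpr hT0) hT0
  have hcT : c * T = N0 + 1 := by rw [hTdef]; field_simp
  have hNT := hNpos T hT0
  simp only [mul_zero, add_zero] at hle
  rw [← hN0def] at hle
  linarith
end
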